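/- Let n ≥ 1 and for 0 < ε < 1 set p₀(ε) = ε/2 + (1−ε)/2^n and I(ε) = 1 − p₀(ε) · h((1/(2p₀(ε)))(ε + (1−ε)/2^n)) − (1−p₀(ε)) · h(((1−ε)/(2(1−p₀(ε))))(1 − 1/2^n)). Then lim_{ε → 0⁺} I(ε)/ε² = 2^(2n) / (8 (2^n − 1) ln 2). -/

import Mathlib

/-!
With the posterior probabilities written as `(1 ± t) / 2`, each binary entropy equals
`1 - D t / (2 log 2)` for `D t = (1 + t) log (1 + t) + (1 - t) log (1 - t)`, so that
`I(ε) = (p₀ D (ε / 2p₀) + (1 - p₀) D (ε / 2(1 - p₀))) / (2 log 2)`. Since `D t ~ t²` as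
`t → 0` and `p₀(ε) → 2⁻ⁿ`, this gives
`I(ε) / ε² → (1 / (4 · 2⁻ⁿ) + 1 / (4 (1 - 2⁻ⁿ))) / (2 log 2)`.
-/

/-- The binary entropy function `h(q) = -q log₂ q - (1-q) log₂ (1-q)`
(with `0 log₂ 0 = 0`, which holds by the junk-value convention `Real.logb 2 0 = 0`). -/
noncomputable def binEntropy (q : ℝ) : ℝ :=
  -q * Real.logb 2 q - (1 - q) * Real.logb 2 (1 - q)

/-- `p₀(ε) = ε/2 + (1-ε)/2^n`, the probability of outcome `z = 0` for a
Deutsch–Jozsa query with pseudo-pure input of purity `ε` and `p = 1/2`. -/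
noncomputable def djP0 (n : ℕ) (ε : ℝ) : ℝ := ε / 2 + (1 - ε) / 2 ^ n

/-- The mutual information gained by a single Deutsch–Jozsa quantum query with a
pseudo-pure state of purity `ε`, when the a priori probability of a constant
function is `1/2`. -/
noncomputable def djInfo (n : ℕ) (ε : ℝ) : ℝ :=
  1 - djP0 n ε * binEntropy (1 / (2 * djP0 n ε) * (ε + (1 - ε) / 2 ^ n))
    - (1 - djP0 n ε) * binEntropy ((1 - ε) / (2 * (1 - djP0 n ε)) * (1 - 1 / 2 ^ n))

open Filter Topology
open Real hiding binEntropy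

lemma tendsto_log_one_add_div_self :
    Tendsto (fun u : ℝ => log (1 + u) / u) (𝓝[≠] 0) (𝓝 1) := by
  have h : HasDerivAt (fun u : ℝ => log (1 + u)) 1 0 := by
    simpa using (hasDerivAt_log (x := 1 + 0) (by norm_num)).comp_const_add 1 0
  exact (hasDerivAt_iff_tendsto_slope.mp h).congr fun u => by simp [slope_def_field]

noncomputable def entropyDeficit (t : ℝ) : ℝ :=
  (1 + t) * log (1 + t) + (1 - t) * log (1 - t)

lemma entropyDeficit_neg (t : ℝ) : entropyDeficit (-t) = entropyDeficit t := by
  simp only [entropyDeficit, sub_neg_eq_add, ← sub_eq_add_neg]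
  ring

lemma binEntropy_one_add_div_two {t : ℝ} (h₁ : 1 + t ≠ 0) (h₂ : 1 - t ≠ 0) :
    binEntropy ((1 + t) / 2) = 1 - entropyDeficit t / (2 * log 2) := by
  have hlog2 : log 2 ≠ 0 := (log_pos one_lt_two).ne'
  rw [binEntropy, entropyDeficit, show 1 - (1 + t) / 2 = (1 - t) / 2 by ring, logb, logb,
    log_div h₁ two_ne_zero, log_div h₂ two_ne_zero]
  field_simp
  ring

lemma tendsto_entropyDeficit_div_sq :
    Tendsto (fun t => entropyDeficit t / t ^ 2) (𝓝[≠] 0) (𝓝 1) := by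
  have hneg : Tendsto (fun t : ℝ => -t) (𝓝[≠] 0) (𝓝[≠] 0) := by
    refine tendsto_nhdsWithin_iff.2 ⟨?_, eventually_nhdsWithin_of_forall fun t ht => ?_⟩
    · simpa using (continuous_neg.tendsto (0 : ℝ)).mono_left nhdsWithin_le_nhds
    · exact neg_ne_zero.2 ht
  have hsq : Tendsto (fun t : ℝ => -t ^ 2) (𝓝[≠] 0) (𝓝[≠] 0) := by
    refine tendsto_nhdsWithin_iff.2 ⟨?_, eventually_nhdsWithin_of_forall fun t ht => ?_⟩
    · have hc : Continuous fun t : ℝ => -t ^ 2 := by fun_prop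
      simpa using (hc.tendsto 0).mono_left nhdsWithin_le_nhds
    · simpa using ht
  have hsum := ((tendsto_log_one_add_div_self.add (tendsto_log_one_add_div_self.comp hneg)).sub
    (tendsto_log_one_add_div_self.comp hsq))
  norm_num at hsum
  refine hsum.congr' ?_
  -- `entropyDeficit t = log (1 - t²) + t (log (1 + t) - log (1 - t))`
  filter_upwards [nhdsWithin_le_nhds (Ioo_mem_nhds neg_one_lt_zero one_pos),
    self_mem_nhdsWithin] with t ⟨ht₁, ht₂⟩ ht0
  have h₁ : 1 + t ≠ 0 := by linarith
  have h₂ : 1 - t ≠ 0 := by linarith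
  simp only [entropyDeficit, ← sub_eq_add_neg,
    show 1 - t ^ 2 = (1 + t) * (1 - t) by ring, log_mul h₁ h₂]
  field_simp
  ring

lemma tendsto_mul_entropyDeficit_div_sq {q : ℝ → ℝ} {b : ℝ} (hb : b ≠ 0)
    (hq : Tendsto q (𝓝[≠] 0) (𝓝 b)) :
    Tendsto (fun ε => q ε * entropyDeficit (ε / (2 * q ε)) / ε ^ 2) (𝓝[≠] 0)
      (𝓝 (1 / (4 * b))) := by
  have hq0 : ∀ᶠ ε in 𝓝[≠] 0, q ε ≠ 0 := hq.eventually_ne hb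
  have ht : Tendsto (fun ε => ε / (2 * q ε)) (𝓝[≠] 0) (𝓝[≠] 0) := by
    refine tendsto_nhdsWithin_iff.2 ⟨?_, ?_⟩
    · have hid : Tendsto (fun ε : ℝ => ε) (𝓝[≠] 0) (𝓝 0) :=
        tendsto_id.mono_left nhdsWithin_le_nhds
      simpa [Pi.div_def] using hid.div (hq.const_mul 2) (by simpa)
    · filter_upwards [hq0, self_mem_nhdsWithin] with ε hqε hε
      exact div_ne_zero hε (mul_ne_zero two_ne_zero hqε)
  refine ((tendsto_entropyDeficit_div_sq.comp ht).div (hq.const_mul 4) (by simpa)).congr' ?_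
  filter_upwards [hq0, self_mem_nhdsWithin] with ε hqε hε
  simp only [Function.comp_apply, Pi.div_apply]
  field_simp
  ring

lemma lt_two_mul_djP0 (n : ℕ) {ε : ℝ} (hε : ε < 1) : ε < 2 * djP0 n ε := by
  have : 0 < (1 - ε) / 2 ^ n := div_pos (by linarith) (by positivity)
  rw [djP0]
  linarith

lemma lt_two_mul_one_sub_djP0 {n : ℕ} (hn : 1 ≤ n) {ε : ℝ} (hε : ε < 1) :
    ε < 2 * (1 - djP0 n ε) := by
  have h2n : (2 : ℝ) ≤ 2 ^ n := by simpa using pow_le_pow_right₀ one_le_two hn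
  have : (1 - ε) / 2 ^ n ≤ (1 - ε) / 2 := div_le_div_of_nonneg_left (by linarith) two_pos h2n
  rw [djP0]
  linarith

lemma djInfo_eq {n : ℕ} (hn : 1 ≤ n) {ε : ℝ} (hε₀ : 0 < ε) (hε₁ : ε < 1) :
    djInfo n ε = (djP0 n ε * entropyDeficit (ε / (2 * djP0 n ε))
      + (1 - djP0 n ε) * entropyDeficit (ε / (2 * (1 - djP0 n ε)))) / (2 * log 2) := by
  have hp := lt_two_mul_djP0 n hε₁
  have hq := lt_two_mul_one_sub_djP0 hn hε₁
  have ht₁ : 0 < ε / (2 * djP0 n ε) ∧ ε / (2 * djP0 n ε) < 1 :=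
    ⟨div_pos hε₀ (by linarith), (div_lt_one (by linarith)).2 hp⟩
  have ht₂ : 0 < ε / (2 * (1 - djP0 n ε)) ∧ ε / (2 * (1 - djP0 n ε)) < 1 :=
    ⟨div_pos hε₀ (by linarith), (div_lt_one (by linarith)).2 hq⟩
  have hp₀ : djP0 n ε ≠ 0 := by linarith
  have hq₀ : 1 - djP0 n ε ≠ 0 := by linarith
  have harg₁ : 1 / (2 * djP0 n ε) * (ε + (1 - ε) / 2 ^ n)
      = (1 + ε / (2 * djP0 n ε)) / 2 := by
    field_simp
    rw [djP0]
    field_simp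
    ring
  have harg₂ : (1 - ε) / (2 * (1 - djP0 n ε)) * (1 - 1 / 2 ^ n)
      = (1 + -(ε / (2 * (1 - djP0 n ε)))) / 2 := by
    field_simp
    rw [djP0]
    field_simp
    ring
  rw [djInfo, harg₁, harg₂, binEntropy_one_add_div_two (by linarith) (by linarith),
    binEntropy_one_add_div_two (by linarith) (by linarith), entropyDeficit_neg]
  ring

/-- As `ε → 0⁺`, `I(ε)/ε² → 2^(2n) / (8 (2^n - 1) ln 2)`: the information gained by one
Deutsch–Jozsa query with a pseudo-pure state is `2^(2n) ε² / (8 (2^n - 1) ln 2) + O(ε³)`. -/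
theorem dj_pps_information_asymptotics (n : ℕ) (hn : 1 ≤ n) :
    Filter.Tendsto (fun ε => djInfo n ε / ε ^ 2) (nhdsWithin 0 (Set.Ioi 0))
      (nhds ((2 : ℝ) ^ (2 * n) / (8 * ((2 : ℝ) ^ n - 1) * Real.log 2))) := by
  have hp : Tendsto (djP0 n) (𝓝[≠] 0) (𝓝 (2 ^ n)⁻¹) := by
    have hc : Continuous (djP0 n) := by unfold djP0; fun_prop
    simpa [djP0] using hc.continuousAt.mono_left (nhdsWithin_le_nhds (a := 0))
  have h2n : (1 : ℝ) < 2 ^ n := one_lt_pow₀ one_lt_two (by omega)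
  have hq₀ : 1 - ((2 : ℝ) ^ n)⁻¹ ≠ 0 := sub_ne_zero.2 (inv_lt_one_of_one_lt₀ h2n).ne'
  have hlim := (((tendsto_mul_entropyDeficit_div_sq (by positivity) hp).add
    (tendsto_mul_entropyDeficit_div_sq hq₀ (tendsto_const_nhds.sub hp))).div_const
    (2 * log 2)).mono_left (nhdsWithin_mono 0 fun ε (hε : ε ∈ Set.Ioi 0) => ne_of_gt hε)
  have hval : (1 / (4 * ((2 : ℝ) ^ n)⁻¹) + 1 / (4 * (1 - ((2 : ℝ) ^ n)⁻¹))) / (2 * log 2)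
      = 2 ^ (2 * n) / (8 * (2 ^ n - 1) * log 2) := by
    have hlog2 : log 2 ≠ 0 := (log_pos one_lt_two).ne'
    have : (2 : ℝ) ^ n - 1 ≠ 0 := by linarith
    rw [pow_mul']
    field_simp
    ring
  rw [← hval]
  refine hlim.congr' ?_
  filter_upwards [Ioo_mem_nhdsGT one_pos] with ε ⟨hε₀, hε₁⟩
  rw [djInfo_eq hn hε₀ hε₁]
  ring
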